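/- arXiv:2403.19752 — 5 statements merged into one kernel-verified Lean document; each statement's English description precedes it below -/
import Mathlib

section
/- Full conformal prediction coverage: if (X_1,Y_1),...,(X_{n+1},Y_{n+1}) are exchangeable and the scores R_1,...,R_{n+1} are exchangeable real random variables, then P(R_{n+1} ≤ Quantile_{1−α}((1/(n+1)) Σ_{i=1}^{n+1} δ_{R_i})) ≥ 1 − α, i.e., the probability that the test score is at most the (1−α)-quantile of the empirical distribution of all n+1 scores is at least 1 − α. -/
/-!
Let the strict rank of an index `j` be the number of scores strictly below `R j`. A score
whose strict rank is below `(1 - α)(n + 1)` lies below the empirical `(1 - α)`-quantile. For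
every outcome at least `(1 - α)(n + 1)` indices have strict rank below `(1 - α)(n + 1)`, and by
exchangeability each index does so with the same probability `p`; summing over the indices
gives `(n + 1) p ≥ (1 - α)(n + 1)`.
-/

open MeasureTheory Finset
open scoped ENNReal

section StrictRank

variable {ι β : Type*} [Fintype ι] [LinearOrder β]

def strictRank (r : ι → β) (j : ι) : ℕ := #{i | r i < r j}

lemma strictRank_comp_perm (r : ι → β) (σ : Equiv.Perm ι) (j : ι) :
    strictRank (fun i => r (σ i)) j = strictRank r (σ j) :=
  card_equiv σ fun i => by simp

lemma le_card_strictRank_lt (r : ι → β) {c : ℝ} (hc : c ≤ Fintype.card ι) :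
    c ≤ #{j | (strictRank r j : ℝ) < c} := by
  classical
  set T : Finset ι := {j | (strictRank r j : ℝ) < c}
  by_contra! hT
  have hTc : Tᶜ.Nonempty := by
    rw [Finset.nonempty_iff_ne_empty, Ne, Finset.compl_eq_empty_iff]
    intro hTuniv
    rw [hTuniv, card_univ] at hT
    linarith
  -- everything strictly below a minimal value outside `T` lies in `T`
  obtain ⟨j, hjT, hj_min⟩ := Tᶜ.exists_min_image r hTc
  have hbelow : ({i | r i < r j} : Finset ι) ⊆ T := fun i hi => by
    by_contra hiT
    exact (hj_min i (mem_compl.mpr hiT)).not_gt (mem_filter.mp hi).2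
  have hj_mem : j ∈ T :=
    mem_filter.mpr ⟨mem_univ j, (Nat.cast_le.mpr (card_le_card hbelow)).trans_lt hT⟩
  exact mem_compl.mp hjT hj_mem

end StrictRank

lemma le_empiricalQuantile_of_strictRank_lt {ι : Type*} [Fintype ι] {q : ℝ} (hq : q ≤ 1)
    (r : ι → ℝ) (j : ι) (h : (strictRank r j : ℝ) < q * Fintype.card ι) :
    r j ≤ sInf {t : ℝ | q ≤ (#{i | r i ≤ t} : ℝ) / Fintype.card ι} := by
  have hcard : (0 : ℝ) < Fintype.card ι := Nat.cast_pos.mpr (Fintype.card_pos_iff.mpr ⟨j⟩)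
  refine le_csInf ?_ fun t ht => ?_
  · obtain ⟨M, hM⟩ := Finite.exists_le r
    refine ⟨M, ?_⟩
    rw [Set.mem_ofPred_eq, filter_true_of_mem fun i _ => hM i, card_univ, div_self hcard.ne']
    exact hq
  · by_contra! htj
    rw [Set.mem_ofPred_eq, le_div_iff₀ hcard] at ht
    have hsub : ({i | r i ≤ t} : Finset ι) ⊆ ({i | r i < r j} : Finset ι) := fun i hi =>
      mem_filter.mpr ⟨mem_univ i, (mem_filter.mp hi).2.trans_lt htj⟩
    have := Nat.cast_le (α := ℝ) |>.mpr (card_le_card hsub)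
    rw [strictRank] at h
    linarith

lemma measurableSet_strictRank_lt {ι : Type*} [Fintype ι] (j : ι) (c : ℝ) :
    MeasurableSet {r : ι → ℝ | (strictRank r j : ℝ) < c} := by
  classical
  have hmeas : Measurable fun r : ι → ℝ => strictRank r j := by
    simp_rw [strictRank, card_filter]
    exact Finset.measurable_sum _ fun i _ => Measurable.ite
      (measurableSet_lt (measurable_pi_apply i) (measurable_pi_apply j))
      measurable_const measurable_const
  exact measurableSet_lt (measurable_from_nat.comp hmeas) measurable_const

lemma measure_strictRank_lt_eq_of_exchangeable {Ω ι : Type*} [MeasurableSpace Ω] [Fintype ι]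
    [DecidableEq ι] {μ : Measure Ω} {X : Ω → ι → ℝ} (hX : Measurable X)
    (hexch : ∀ σ : Equiv.Perm ι, μ.map (fun ω i => X ω (σ i)) = μ.map X) (c : ℝ) (j k : ι) :
    μ {ω | (strictRank (X ω) j : ℝ) < c} = μ {ω | (strictRank (X ω) k : ℝ) < c} := by
  set σ := Equiv.swap j k
  have hXσ : Measurable fun ω i => X ω (σ i) :=
    measurable_pi_lambda _ fun i => measurable_pi_iff.mp hX (σ i)
  have hj : {ω | (strictRank (X ω) j : ℝ) < c} =
      (fun ω i => X ω (σ i)) ⁻¹' {r | (strictRank r k : ℝ) < c} := by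
    ext ω
    simp [strictRank_comp_perm, σ]
  rw [hj, ← Measure.map_apply hXσ (measurableSet_strictRank_lt k c), hexch,
    Measure.map_apply hX (measurableSet_strictRank_lt k c)]
  rfl

open Classical in
lemma le_sum_measure_of_le_card_mem {Ω ι : Type*} [MeasurableSpace Ω] [Fintype ι]
    {μ : Measure Ω} [IsProbabilityMeasure μ] {E : ι → Set Ω} (hE : ∀ j, MeasurableSet (E j))
    {c : ℝ≥0∞} (hc : ∀ ω, c ≤ #{j | ω ∈ E j}) : c ≤ ∑ j, μ (E j) := by
  have hcount : ∀ ω, (#{j | ω ∈ E j} : ℝ≥0∞) = ∑ j, (E j).indicator 1 ω := by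
    intro ω
    rw [card_filter, Nat.cast_sum]
    simp [Set.indicator_apply]
  calc c = ∫⁻ _, c ∂μ := by simp
    _ ≤ ∫⁻ ω, ∑ j, (E j).indicator 1 ω ∂μ :=
      lintegral_mono fun ω => (hc ω).trans (hcount ω).le
    _ = ∑ j, μ (E j) := by
      rw [lintegral_finsetSum _ fun j _ => measurable_one.indicator (hE j)]
      simp_rw [lintegral_indicator_one (hE _)]

theorem full_conformal_coverage_general
    {Ω : Type*} [MeasureSpace Ω] [IsProbabilityMeasure (volume : Measure Ω)]
    (n : ℕ) (α : ℝ) (hα : α ∈ Set.Ioo (0 : ℝ) 1)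
    (R : Fin (n + 1) → Ω → ℝ)
    (hRmeas : ∀ i, Measurable (R i))
    (hRexch : ∀ σ : Equiv.Perm (Fin (n + 1)),
      Measure.map (fun ω => fun i => R (σ i) ω) volume
        = Measure.map (fun ω => fun i => R i ω) volume) :
    ENNReal.ofReal (1 - α) ≤
      volume {ω : Ω | R (Fin.last n) ω ≤
        sInf {t : ℝ | 1 - α ≤
          ((univ.filter fun i : Fin (n + 1) => R i ω ≤ t).card : ℝ) / (n + 1)}} := by
  obtain ⟨hα0, hα1⟩ := hα
  set N : ℕ := Fintype.card (Fin (n + 1))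
  set X : Ω → Fin (n + 1) → ℝ := fun ω i => R i ω
  have hX : Measurable X := measurable_pi_lambda _ hRmeas
  set E : Fin (n + 1) → Set Ω := fun j => {ω | (strictRank (X ω) j : ℝ) < (1 - α) * N}
  have hsum : ENNReal.ofReal ((1 - α) * N) ≤ ∑ j, volume (E j) := by
    refine le_sum_measure_of_le_card_mem (fun j => hX (measurableSet_strictRank_lt j _))
      fun ω => ENNReal.ofReal_le_of_le_toReal ?_
    simpa [E] using le_card_strictRank_lt (X ω) (c := (1 - α) * N) (by nlinarith)
  have hcover : ENNReal.ofReal (1 - α) ≤ volume (E (Fin.last n)) := by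
    have hsame : ∀ j, volume (E j) = volume (E (Fin.last n)) := fun j =>
      measure_strictRank_lt_eq_of_exchangeable hX hRexch _ j (Fin.last n)
    refine (ENNReal.mul_le_mul_iff_right (a := N) (by simp [N]) (ENNReal.natCast_ne_top N)).mp ?_
    calc N * ENNReal.ofReal (1 - α) = ENNReal.ofReal ((1 - α) * N) := by
          rw [ENNReal.ofReal_mul (by linarith), ENNReal.ofReal_natCast, mul_comm]
      _ ≤ ∑ j, volume (E j) := hsum
      _ = N * volume (E (Fin.last n)) := by simp [hsame, N]
  refine hcover.trans (measure_mono fun ω hω => ?_)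
  simpa [N] using
    le_empiricalQuantile_of_strictRank_lt (by linarith : 1 - α ≤ 1) (X ω) (Fin.last n) hω

/-- Full conformal prediction coverage: if the data `(X i, Y i)` are exchangeable and
the conformity scores `R i` are exchangeable, then the probability that the test score
`R (n+1)` is at most the `(1−α)`-quantile of the empirical distribution of all `n+1`
scores is at least `1 − α`. -/
theorem full_conformal_coverage
    {Ω : Type*} [MeasureSpace Ω] [IsProbabilityMeasure (volume : Measure Ω)]
    {γ : Type*} [MeasurableSpace γ]
    (n : ℕ) (α : ℝ) (hα : α ∈ Set.Ioo (0 : ℝ) 1)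
    (Z : Fin (n + 1) → Ω → γ) (R : Fin (n + 1) → Ω → ℝ)
    (hZmeas : ∀ i, Measurable (Z i)) (hRmeas : ∀ i, Measurable (R i))
    (hZexch : ∀ σ : Equiv.Perm (Fin (n + 1)),
      Measure.map (fun ω => fun i => Z (σ i) ω) volume
        = Measure.map (fun ω => fun i => Z i ω) volume)
    (hRexch : ∀ σ : Equiv.Perm (Fin (n + 1)),
      Measure.map (fun ω => fun i => R (σ i) ω) volume
        = Measure.map (fun ω => fun i => R i ω) volume) :
    ENNReal.ofReal (1 - α) ≤
      volume {ω : Ω | R (Fin.last n) ω ≤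
        sInf {t : ℝ | 1 - α ≤
          ((univ.filter fun i : Fin (n + 1) => R i ω ≤ t).card : ℝ) / (n + 1)}} :=
  full_conformal_coverage_general n α hα R hRmeas hRexch
end

section
/- Coverage gap bound under non-exchangeability: let Z = (Z_1,...,Z_{n+1}) be a random sequence, Z^i the sequence with Z_i and Z_{n+1} swapped, and w_1,...,w_n ∈ [0,1] prespecified weights. For the weighted conformal prediction set Ĉ_n built with these weights, (1−α) − P(Y_{n+1} ∈ Ĉ_n(X_{n+1})) ≤ (Σ_{i=1}^n w_i · d_TV(law(Z), law(Z^i))) / (1 + Σ_{i=1}^n w_i). -/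
/-!
Weight the calibration points by `wᵢ` and the test point by `1`, and call a point *strange*
when the points scoring at least as high as it carry total weight at most `α (1 + ∑ w)`.
All strange points score at least as high as the lowest-scoring one, so their total weight is
at most `α (1 + ∑ w)`, whatever the data. If the test point is not covered it is strange.
Swapping it with point `i` moves the probability of that event by at most `d_TV(Z, Zⁱ)`, and,
since `wᵢ ≤ 1`, the swapped test point being strange forces point `i` to be strange. Averaging
over `i` with weights `wᵢ` and comparing with the deterministic bound gives the theorem.
-/

open MeasureTheory Finset

noncomputable def tvDist {β : Type*} [MeasurableSpace β] (μ ν : Measure β) : ℝ :=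
  ⨆ s : {s : Set β // MeasurableSet s}, |(μ s.1).toReal - (ν s.1).toReal|

lemma tvDist_self {β : Type*} [MeasurableSpace β] (μ : Measure β) : tvDist μ μ = 0 := by
  simp [tvDist]

lemma measureReal_sub_measureReal_le_tvDist {β : Type*} [MeasurableSpace β] (μ ν : Measure β)
    [IsFiniteMeasure μ] [IsFiniteMeasure ν] {A : Set β} (hA : MeasurableSet A) :
    μ.real A - ν.real A ≤ tvDist μ ν := by
  have hbdd : BddAbove (Set.range fun s : {s : Set β // MeasurableSet s} =>
      |(μ s.1).toReal - (ν s.1).toReal|) := by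
    refine ⟨μ.real Set.univ + ν.real Set.univ, ?_⟩
    rintro _ ⟨s, rfl⟩
    change |μ.real s - ν.real s| ≤ _
    have hμs : μ.real s ≤ μ.real Set.univ := measureReal_mono (Set.subset_univ _)
    have hνs : ν.real s ≤ ν.real Set.univ := measureReal_mono (Set.subset_univ _)
    rw [abs_le]
    constructor <;>
      linarith [measureReal_nonneg (μ := μ) (s := s), measureReal_nonneg (μ := ν) (s := s)]
  exact (le_abs_self _).trans (le_ciSup hbdd ⟨A, hA⟩)

section UpperWeight

variable {ι : Type*} [Fintype ι]

noncomputable def upperWeight (W s : ι → ℝ) (k : ι) : ℝ :=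
  ∑ j, if s k ≤ s j then W j else 0

lemma sum_ite_upperWeight_le {W : ι → ℝ} (hW : ∀ k, 0 ≤ W k) (s : ι → ℝ) {c : ℝ} (hc : 0 ≤ c) :
    ∑ k, (if upperWeight W s k ≤ c then W k else 0) ≤ c := by
  rw [← sum_filter]
  obtain hK | ⟨k₀, hk₀, hmin⟩ :=
    (univ.filter fun k => upperWeight W s k ≤ c).eq_empty_or_nonempty.imp id
      fun h => (univ.filter _).exists_min_image s h
  · simpa [hK] using hc
  calc ∑ k ∈ univ.filter fun k => upperWeight W s k ≤ c, W k
      ≤ ∑ k ∈ univ.filter fun k => s k₀ ≤ s k, W k :=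
        sum_le_sum_of_subset_of_nonneg (fun k hk => by simpa using hmin k hk)
          fun k _ _ => hW k
    _ = upperWeight W s k₀ := by rw [sum_filter]; rfl
    _ ≤ c := (mem_filter.mp hk₀).2

lemma measurable_upperWeight (W : ι → ℝ) (k : ι) :
    Measurable fun s : ι → ℝ => upperWeight W s k :=
  Finset.measurable_sum _ fun j _ =>
    Measurable.ite (measurableSet_le (measurable_pi_apply k) (measurable_pi_apply j))
      measurable_const measurable_const

variable [DecidableEq ι]

lemma upperWeight_le_upperWeight_comp_swap {W : ι → ℝ} (s : ι → ℝ) {i j : ι} (hij : W i ≤ W j) :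
    upperWeight W s i ≤ upperWeight W (s ∘ Equiv.swap i j) j := by
  rcases eq_or_ne i j with rfl | hne
  · simp [upperWeight]
  have hσ : upperWeight W (s ∘ Equiv.swap i j) j
      = ∑ m, if s i ≤ s m then W (Equiv.swap i j m) else 0 := by
    simp only [upperWeight, Function.comp_apply, Equiv.swap_apply_right]
    exact Fintype.sum_equiv (Equiv.swap i j) _ _ fun m => by simp
  have hrest : ∑ m ∈ ({i, j} : Finset ι)ᶜ, (if s i ≤ s m then W (Equiv.swap i j m) else 0)
      = ∑ m ∈ ({i, j} : Finset ι)ᶜ, if s i ≤ s m then W m else 0 := by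
    refine sum_congr rfl fun m hm => ?_
    simp only [mem_compl, mem_insert, mem_singleton, not_or] at hm
    rw [Equiv.swap_apply_of_ne_of_ne hm.1 hm.2]
  rw [hσ, upperWeight, ← sum_add_sum_compl {i, j}, ← sum_add_sum_compl {i, j}, hrest,
    sum_pair hne, sum_pair hne]
  simp only [Equiv.swap_apply_left, Equiv.swap_apply_right, le_refl, if_true]
  split_ifs <;> linarith

end UpperWeight

lemma sum_mul_measureReal_upperWeight_le {Ω ι : Type*} [MeasurableSpace Ω] [Fintype ι]
    (μ : Measure Ω) [IsProbabilityMeasure μ] {W : ι → ℝ} (hW : ∀ k, 0 ≤ W k)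
    {s : Ω → ι → ℝ} (hs : Measurable s) {c : ℝ} (hc : 0 ≤ c) :
    ∑ k, W k * μ.real {ω | upperWeight W (s ω) k ≤ c} ≤ c := by
  have hG : ∀ k, MeasurableSet {ω | upperWeight W (s ω) k ≤ c} := fun k =>
    measurableSet_le ((measurable_upperWeight W k).comp hs) measurable_const
  have hint : ∀ k, Integrable (fun ω => W k * {ω | upperWeight W (s ω) k ≤ c}.indicator 1 ω) μ :=
    fun k => ((integrable_indicator_iff (hG k)).2 (integrable_const 1).integrableOn).const_mul _
  calc ∑ k, W k * μ.real {ω | upperWeight W (s ω) k ≤ c}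
      = ∫ ω, ∑ k, W k * {ω | upperWeight W (s ω) k ≤ c}.indicator 1 ω ∂μ := by
        rw [integral_finsetSum _ fun k _ => hint k]
        simp only [integral_const_mul, integral_indicator_one (hG _)]
    _ ≤ ∫ _, c ∂μ := by
        refine integral_mono (integrable_finsetSum _ fun k _ => hint k) (integrable_const c)
          fun ω => le_of_eq_of_le (sum_congr rfl fun k _ => ?_) (sum_ite_upperWeight_le hW (s ω) hc)
        simp [Set.indicator_apply]
    _ = c := by simp

section WeightedConformal

variable {n : ℕ}

/-- The `(1 - α)`-quantile of `∑ᵢ pᵢ δ_{vᵢ} + p_{n+1} δ_{+∞}` with `pᵢ = wᵢ / (1 + ∑ w)` and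
`p_{n+1} = 1 / (1 + ∑ w)`. -/
noncomputable def weightedConformalThreshold (α : ℝ) (w v : Fin n → ℝ) : EReal :=
  sInf {t : EReal | 1 - α ≤
    (∑ i : Fin n, if (v i : EReal) ≤ t then w i else 0) / (1 + ∑ i : Fin n, w i)
      + (if (⊤ : EReal) ≤ t then 1 / (1 + ∑ i : Fin n, w i) else 0)}

lemma upperWeight_snoc_last (w : Fin n → ℝ) (q : Fin (n + 1) → ℝ) :
    upperWeight (Fin.snoc w 1) q (Fin.last n)
      = ∑ i, (if q (Fin.last n) ≤ q i.castSucc then w i else 0) + 1 := by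
  simp [upperWeight, Fin.sum_univ_castSucc]

lemma upperWeight_snoc_last_le_of_threshold_lt {α : ℝ} {w : Fin n → ℝ} (hw : ∀ i, 0 ≤ w i)
    {q : Fin (n + 1) → ℝ} (h : weightedConformalThreshold α w (Fin.init q) < q (Fin.last n)) :
    upperWeight (Fin.snoc w 1) q (Fin.last n) ≤ α * (1 + ∑ i, w i) := by
  obtain ⟨t, ht, htq⟩ := sInf_lt_iff.mp h
  have hD : 0 < 1 + ∑ i, w i := by linarith [sum_nonneg fun i (_ : i ∈ univ) => hw i]
  have ht_top : ¬ (⊤ : EReal) ≤ t := fun h => not_top_lt (h.trans_lt htq)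
  simp only [Set.mem_ofPred_eq, if_neg ht_top, add_zero, le_div_iff₀ hD] at ht
  -- a calibration score at most `t` lies strictly below the test score
  have hdisjoint : ∀ i, (if (Fin.init q i : EReal) ≤ t then w i else 0)
      + (if q (Fin.last n) ≤ q i.castSucc then w i else 0) ≤ w i := fun i => by
    by_cases hi : (Fin.init q i : EReal) ≤ t
    · have hlt : q i.castSucc < q (Fin.last n) := by exact_mod_cast hi.trans_lt htq
      simp [hi, not_le.mpr hlt]
    · simp only [hi, if_false, zero_add]
      split_ifs <;> linarith [hw i]
  have hsum := sum_le_sum fun i (_ : i ∈ univ) => hdisjoint i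
  rw [sum_add_distrib] at hsum
  rw [upperWeight_snoc_last]
  linarith

end WeightedConformal

lemma measurableSet_upperWeight_comp_le {ι β : Type*} [MeasurableSpace β] [Fintype ι]
    {S : β → ℝ} (hS : Measurable S) (W : ι → ℝ) (j : ι) (c : ℝ) :
    MeasurableSet {z : ι → β | upperWeight W (S ∘ z) j ≤ c} :=
  measurableSet_le ((measurable_upperWeight W j).comp
    (measurable_pi_iff.mpr fun i => hS.comp (measurable_pi_apply i))) measurable_const

lemma sum_mul_measureReal_map_upperWeight_le {Ω ι β : Type*} [MeasurableSpace Ω]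
    [MeasurableSpace β] [Fintype ι] [DecidableEq ι] (μ : Measure Ω) [IsProbabilityMeasure μ]
    {X : Ω → ι → β} (hX : Measurable X) {S : β → ℝ} (hS : Measurable S) {W : ι → ℝ}
    (hW : ∀ k, 0 ≤ W k) {j : ι} (hj : ∀ k, W k ≤ W j) {c : ℝ} (hc : 0 ≤ c) :
    (∑ k, W k) * (μ.map X).real {z | upperWeight W (S ∘ z) j ≤ c}
      ≤ c + ∑ k, W k * tvDist (μ.map X) (μ.map fun ω => X ω ∘ Equiv.swap k j) := by
  let A := {z : ι → β | upperWeight W (S ∘ z) j ≤ c}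
  have hA : MeasurableSet A := measurableSet_upperWeight_comp_le hS W j c
  let G : ι → Set Ω := fun k => {ω | upperWeight W (S ∘ X ω) k ≤ c}
  -- the swapped sequence puts the `k`-th point in the test position
  have hswap : ∀ k, (μ.map X).real A
      ≤ μ.real (G k) + tvDist (μ.map X) (μ.map fun ω => X ω ∘ Equiv.swap k j) := fun k => by
    have hsub : (fun ω => X ω ∘ Equiv.swap k j) ⁻¹' A ⊆ G k := fun ω hω =>
      (upperWeight_le_upperWeight_comp_swap _ (hj k)).trans hω
    have hmap : (μ.map fun ω => X ω ∘ Equiv.swap k j).real A ≤ μ.real (G k) :=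
      (map_measureReal_apply (measurable_pi_iff.mpr fun i =>
        (measurable_pi_apply _).comp hX) hA).trans_le (measureReal_mono hsub)
    linarith [measureReal_sub_measureReal_le_tvDist (μ.map X)
      (μ.map fun ω => X ω ∘ Equiv.swap k j) hA]
  have hstrange : ∑ k, W k * μ.real (G k) ≤ c := sum_mul_measureReal_upperWeight_le μ hW
    (measurable_pi_iff.mpr fun i => hS.comp ((measurable_pi_apply i).comp hX)) hc
  calc (∑ k, W k) * (μ.map X).real A
      ≤ ∑ k, W k * (μ.real (G k) + tvDist (μ.map X) (μ.map fun ω => X ω ∘ Equiv.swap k j)) := by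
        rw [sum_mul]
        exact sum_le_sum fun k _ => mul_le_mul_of_nonneg_left (hswap k) (hW k)
    _ ≤ c + ∑ k, W k * tvDist (μ.map X) (μ.map fun ω => X ω ∘ Equiv.swap k j) := by
        simp only [mul_add, sum_add_distrib]
        linarith

/-- Conformal prediction beyond exchangeability (Barber et al.): for any data sequence
`Z = (Z 1, ..., Z (n+1))` (not necessarily exchangeable), prespecified weights
`w i ∈ [0,1]` and a score function `S`, the coverage gap of the weighted conformal set
is bounded by `(∑ i w i · d_TV(Z, Z^i)) / (1 + ∑ i w i)`, where `Z^i` is the sequence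
with the `i`-th and `(n+1)`-st points swapped. -/
theorem conformal_beyond_exchangeability_gap
    {Ω : Type*} [MeasureSpace Ω] [IsProbabilityMeasure (volume : Measure Ω)]
    {𝓧 𝓨 : Type*} [MeasurableSpace 𝓧] [MeasurableSpace 𝓨]
    (n : ℕ) (α : ℝ) (hα : α ∈ Set.Ioo (0 : ℝ) 1)
    (Z : Fin (n + 1) → Ω → 𝓧 × 𝓨) (S : 𝓧 × 𝓨 → ℝ) (w : Fin n → ℝ)
    (hZmeas : ∀ i, Measurable (Z i)) (hSmeas : Measurable S)
    (hw : ∀ i, w i ∈ Set.Icc (0 : ℝ) 1) :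
    (1 - α) -
      (volume {ω : Ω | (S (Z (Fin.last n) ω) : EReal) ≤
        sInf {t : EReal | 1 - α ≤
          (∑ i : Fin n, if (S (Z i.castSucc ω) : EReal) ≤ t then w i else 0)
              / (1 + ∑ i : Fin n, w i)
            + (if (⊤ : EReal) ≤ t then 1 / (1 + ∑ i : Fin n, w i) else 0)}}).toReal
    ≤ (∑ i : Fin n, w i *
        tvDist (Measure.map (fun ω => fun j => Z j ω) volume)
          (Measure.map
            (fun ω => fun j => Z (Equiv.swap i.castSucc (Fin.last n) j) ω) volume))
      / (1 + ∑ i : Fin n, w i) := by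
  have hw0 : ∀ i, 0 ≤ w i := fun i => (hw i).1
  have hD : 0 < 1 + ∑ i, w i := by linarith [sum_nonneg fun i (_ : i ∈ univ) => hw0 i]
  let X : Ω → Fin (n + 1) → 𝓧 × 𝓨 := fun ω j => Z j ω
  have hX : Measurable X := measurable_pi_iff.mpr hZmeas
  let A := {z | upperWeight (Fin.snoc w 1) (S ∘ z) (Fin.last n) ≤ α * (1 + ∑ i, w i)}
  have hbound := sum_mul_measureReal_map_upperWeight_le volume hX hSmeas (W := Fin.snoc w 1)
    (Fin.lastCases (by simp) fun i => by simp [hw0 i])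
    (Fin.lastCases le_rfl fun i => by simpa using (hw i).2) (mul_nonneg hα.1.le hD.le)
  simp only [Fin.sum_univ_castSucc, Fin.snoc_castSucc, Fin.snoc_last, Equiv.swap_self,
    Equiv.coe_refl, Function.comp_id, tvDist_self, mul_zero, add_zero] at hbound
  let E := {ω | ((S (X ω (Fin.last n)) : ℝ) : EReal)
    ≤ weightedConformalThreshold α w (Fin.init fun j => S (X ω j))}
  have hcover : 1 - (volume.map X).real A ≤ volume.real E := by
    have hA : MeasurableSet A := measurableSet_upperWeight_comp_le hSmeas _ _ _
    rw [map_measureReal_apply hX hA, ← probReal_compl_eq_one_sub (hX hA)]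
    exact measureReal_mono (Set.compl_subset_comm.mp fun ω hω =>
      upperWeight_snoc_last_le_of_threshold_lt hw0 (not_le.mp hω))
  have hgap : (1 - α - volume.real E) * (1 + ∑ i, w i)
      ≤ ∑ i, w i * tvDist (volume.map X)
          (volume.map fun ω => X ω ∘ Equiv.swap i.castSucc (Fin.last n)) :=
    calc (1 - α - volume.real E) * (1 + ∑ i, w i)
        ≤ ((volume.map X).real A - α) * (1 + ∑ i, w i) :=
          mul_le_mul_of_nonneg_right (by linarith) hD.le
      _ ≤ _ := by linarith
  exact (le_div_iff₀ hD).2 hgap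
end

section
/- Weighted conformal coverage under covariate shift: suppose (X_i,Y_i) are i.i.d. from P = P_X × P_{Y|X} for i = 1,...,n, and (X_{n+1},Y_{n+1}) ~ P̃_X × P_{Y|X} independently, with P̃_X absolutely continuous with respect to P_X and w = dP̃_X/dP_X. Then the weighted conformal set Ĉ_n(x) = {y : V_{n+1}^{(x,y)} ≤ Quantile(1−α; Σ_{i=1}^n p_i^w(x) δ_{V_i^{(x,y)}} + p_{n+1}^w(x) δ_∞)}, with p_i^w(x) = w(X_i)/(Σ_j w(X_j) + w(x)) and p_{n+1}^w(x) = w(x)/(Σ_j w(X_j) + w(x)), satisfies P(Y_{n+1} ∈ Ĉ_n(X_{n+1})) ≥ 1 − α. -/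
open MeasureTheory ProbabilityTheory Finset
open scoped ENNReal

/-!
Pull the data back to `(𝓧 × 𝓨)^(n+1)`, where its law is `P^(n+1)` tilted by the weight
`w(x_{n+1})` of the test point. Miscoverage forces the weight of the training scores lying
strictly below the test score to be at least `1 - α` of the total weight. Transposing the test
point with point `i` turns the tilted probability of that event into the `P^(n+1)`-integral of
`w(x_i)` over the event that point `i` is in this upper tail. Summed over `i`, the tail carries
at most an `α`-fraction of the total weight `∑ w(x_i)`, and each `w(x_i)` integrates to `1`.
-/

section WeightBelow

variable {ι β : Type*} [Fintype ι] [LinearOrder β]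

def weightBelow (W : ι → ℝ) (V : ι → β) (x : β) : ℝ := ∑ k with V k < x, W k

lemma weightBelow_comp_perm (W : ι → ℝ) (V : ι → β) (σ : Equiv.Perm ι) (x : β) :
    weightBelow (W ∘ σ) (V ∘ σ) x = weightBelow W V x := by
  simp only [weightBelow, sum_filter]
  exact Equiv.sum_comp σ fun k => if V k < x then W k else 0

lemma weightBelow_last {n : ℕ} (W : Fin (n + 1) → ℝ) (V : Fin (n + 1) → β) :
    weightBelow W V (V (Fin.last n)) =
      weightBelow (W ∘ Fin.castSucc) (V ∘ Fin.castSucc) (V (Fin.last n)) := by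
  simp [weightBelow, sum_filter, Fin.sum_univ_castSucc]

/-- The point of smallest value in the tail already has `(1 - α) * ∑ W` of weight strictly
below it, so the tail itself weighs at most `α * ∑ W`. -/
lemma sum_filter_weightBelow_ge_le {α : ℝ} (hα : 0 ≤ α) {W : ι → ℝ} (hW : ∀ i, 0 ≤ W i)
    (V : ι → β) :
    ∑ i with (1 - α) * ∑ j, W j ≤ weightBelow W V (V i), W i ≤ α * ∑ j, W j := by
  set B := ({i | (1 - α) * ∑ j, W j ≤ weightBelow W V (V i)} : Finset ι)
  rcases B.eq_empty_or_nonempty with hB | hB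
  · rw [hB, sum_empty]
    exact mul_nonneg hα (sum_nonneg fun j _ => hW j)
  obtain ⟨i₀, hi₀, hmin⟩ := B.exists_min_image V hB
  have hsub : B ⊆ ({i | ¬ V i < V i₀} : Finset ι) := fun i hi => by
    simpa using hmin i hi
  calc ∑ i ∈ B, W i ≤ ∑ i with ¬ V i < V i₀, W i :=
        sum_le_sum_of_subset_of_nonneg hsub fun i _ _ => hW i
    _ = ∑ j, W j - weightBelow W V (V i₀) := by
        rw [weightBelow, ← sum_filter_add_sum_filter_not univ (fun i => V i < V i₀) W]
        ring
    _ ≤ α * ∑ j, W j := by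
        have := (mem_filter.mp hi₀).2
        linarith

lemma coe_le_sInf_of_weightBelow_lt {α : ℝ} (hα : α < 1) {W : ι → ℝ} (hW : ∀ i, 0 ≤ W i)
    {s : ι → ℝ} {v D : ℝ} (c : ℝ) (h : weightBelow W s v < (1 - α) * D) :
    (v : EReal) ≤ sInf {t : EReal | 1 - α ≤
      (∑ i, if (s i : EReal) ≤ t then W i else 0) / D + if (⊤ : EReal) ≤ t then c else 0} := by
  refine le_sInf fun t ht => ?_
  by_contra! htv
  have hD : 0 < D := by
    have : 0 ≤ weightBelow W s v := sum_nonneg fun i _ => hW i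
    nlinarith
  have hle : (∑ i, if (s i : EReal) ≤ t then W i else 0) ≤ weightBelow W s v := by
    rw [weightBelow, sum_filter]
    refine sum_le_sum fun i _ => ?_
    split_ifs with hi hi'
    · exact le_rfl
    · exact absurd (EReal.coe_lt_coe_iff.mp (hi.trans_lt htv)) hi'
    · exact hW i
    · exact le_rfl
  simp only [Set.mem_ofPred_eq, if_neg (htv.trans (EReal.coe_lt_top v)).not_ge, add_zero,
    le_div_iff₀ hD] at ht
  linarith

end WeightBelow

section Pi

variable {ι : Type*} [Fintype ι] {α : ι → Type*} [∀ i, MeasurableSpace (α i)]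
  {μ : ∀ i, Measure (α i)} [∀ i, IsProbabilityMeasure (μ i)]

lemma lintegral_pi_prod {f : ∀ i, α i → ℝ≥0∞} (hf : ∀ i, Measurable (f i)) :
    ∫⁻ z, ∏ i, f i (z i) ∂Measure.pi μ = ∏ i, ∫⁻ x, f i x ∂μ i := by
  rw [lintegral_prod_eq_prod_lintegral_of_indepFun _ _
    (iIndepFun_pi fun i => (hf i).aemeasurable) fun i => (hf i).comp (measurable_pi_apply i)]
  exact prod_congr rfl fun i _ => (measurePreserving_eval μ i).lintegral_comp (hf i)

lemma pi_withDensity {f : ∀ i, α i → ℝ≥0∞} (hf : ∀ i, Measurable (f i))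
    [∀ i, SigmaFinite ((μ i).withDensity (f i))] :
    Measure.pi (fun i => (μ i).withDensity (f i)) =
      (Measure.pi μ).withDensity fun z => ∏ i, f i (z i) := by
  refine Measure.pi_eq (μ := fun i => (μ i).withDensity (f i)) fun s hs => ?_
  have hind : (Set.univ.pi s).indicator (fun z => ∏ i, f i (z i)) =
      fun z => ∏ i, (s i).indicator (f i) (z i) := by
    ext z
    by_cases hz : z ∈ Set.univ.pi s
    · rw [Set.indicator_of_mem hz]
      exact prod_congr rfl fun i _ => (Set.indicator_of_mem (hz i (Set.mem_univ i)) _).symm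
    · obtain ⟨i, -, hi⟩ := not_forall₂.mp hz
      rw [Set.indicator_of_notMem hz]
      exact (prod_eq_zero (mem_univ i) (Set.indicator_of_notMem hi _)).symm
  rw [withDensity_apply _ (.univ_pi hs), ← lintegral_indicator (.univ_pi hs), hind,
    lintegral_pi_prod fun i => (hf i).indicator (hs i)]
  exact prod_congr rfl fun i _ => by rw [lintegral_indicator (hs i), withDensity_apply _ (hs i)]

end Pi

section Exchangeable

variable {ι γ : Type*} [Fintype ι] [MeasurableSpace γ]
  {P : Measure γ} [IsProbabilityMeasure P]

lemma lintegral_comp_perm_pi (σ : Equiv.Perm ι) {F : (ι → γ) → ℝ≥0∞} (hF : Measurable F) :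
    ∫⁻ z, F (z ∘ σ) ∂Measure.pi (fun _ => P) = ∫⁻ z, F z ∂Measure.pi (fun _ => P) := by
  have h := (measurePreserving_piCongrLeft (fun _ : ι => P) σ.symm).lintegral_comp hF
  convert h using 3 with z
  congr 1
  funext k
  simpa using (MeasurableEquiv.piCongrLeft_apply_apply (β := fun _ => γ) σ.symm z (σ k)).symm

open Classical in
/-- Each transposition `swap i j` moves the tilt from coordinate `j` to coordinate `i`;
averaging these `card ι` expressions of the same mass brings in `hbound`. -/
lemma withDensity_apply_le_of_sum_swap_le [DecidableEq ι] {g : γ → ℝ≥0∞} (hg : Measurable g)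
    (hg1 : ∫⁻ x, g x ∂P = 1) {A : Set (ι → γ)} (hA : MeasurableSet A) (j : ι) {c : ℝ≥0∞}
    (hbound : ∀ z, ∑ i with z ∘ Equiv.swap i j ∈ A, g (z i) ≤ c * ∑ i, g (z i)) :
    (Measure.pi (fun _ => P)).withDensity (fun z => g (z j)) A ≤ c := by
  set Q := Measure.pi fun _ : ι => P
  have : Nonempty ι := ⟨j⟩
  have hgi : ∀ i, Measurable fun z : ι → γ => g (z i) := fun i => hg.comp (measurable_pi_apply i)
  set F : ι → (ι → γ) → ℝ≥0∞ := fun i z => A.indicator (fun z => g (z j)) (z ∘ Equiv.swap i j)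
  have hF : ∀ i, Measurable (F i) := fun i =>
    ((hgi j).indicator hA).comp (measurable_pi_lambda _ fun k => measurable_pi_apply _)
  have hswap : ∀ i, Q.withDensity (fun z => g (z j)) A = ∫⁻ z, F i z ∂Q := fun i => by
    rw [withDensity_apply _ hA, ← lintegral_indicator hA,
      lintegral_comp_perm_pi (Equiv.swap i j) ((hgi j).indicator hA)]
  have hcard : (Fintype.card ι : ℝ≥0∞) ≠ 0 := Nat.cast_ne_zero.mpr Fintype.card_ne_zero
  refine (ENNReal.mul_le_mul_iff_right hcard (ENNReal.natCast_ne_top _)).mp ?_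
  calc (Fintype.card ι : ℝ≥0∞) * Q.withDensity (fun z => g (z j)) A
      = ∑ i, ∫⁻ z, F i z ∂Q := by simp [← hswap]
    _ = ∫⁻ z, ∑ i, F i z ∂Q := (lintegral_finsetSum _ fun i _ => hF i).symm
    _ ≤ ∫⁻ z, c * ∑ i, g (z i) ∂Q := by
        refine lintegral_mono fun z => ?_
        convert hbound z using 1
        rw [sum_filter]
        exact sum_congr rfl fun i _ => by simp [F, Set.indicator_apply]
    _ = c * Fintype.card ι := by
        rw [lintegral_const_mul _ (Finset.measurable_sum _ fun i _ => hgi i),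
          lintegral_finsetSum _ fun i _ => hgi i]
        simp [Q, (measurePreserving_eval (fun _ : ι => P) _).lintegral_comp hg, hg1]
    _ = _ := mul_comm _ _

end Exchangeable

section Conformal

variable {ι β : Type*} [Fintype ι] (S : (ι → β) → ι → ℝ) (W : β → ℝ) (α : ℝ)

/-- Contains the event that the weighted conformal set misses point `j`
(`coe_le_sInf_of_weightBelow_lt`). -/
def weightedMiscoverageSet (j : ι) : Set (ι → β) :=
  {d | (1 - α) * ∑ k, W (d k) ≤ weightBelow (W ∘ d) (S d) (S d j)}

variable {S W α}

lemma measurableSet_weightedMiscoverageSet [MeasurableSpace β]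
    (hS : ∀ i, Measurable fun d => S d i) (hW : Measurable W) (j : ι) :
    MeasurableSet (weightedMiscoverageSet S W α j) := by
  have hWk : ∀ k, Measurable fun d : ι → β => W (d k) := fun k => hW.comp (measurable_pi_apply k)
  refine measurableSet_le (measurable_const.mul (Finset.measurable_sum _ fun k _ => hWk k)) ?_
  simp only [weightBelow, sum_filter]
  exact Finset.measurable_sum _ fun k _ =>
    Measurable.ite (measurableSet_lt (hS k) (hS j)) (hWk k) measurable_const

lemma comp_perm_mem_weightedMiscoverageSet (hS : ∀ (σ : Equiv.Perm ι) d, S (d ∘ σ) = S d ∘ σ)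
    (σ : Equiv.Perm ι) (d : ι → β) (j : ι) :
    d ∘ σ ∈ weightedMiscoverageSet S W α j ↔
      (1 - α) * ∑ k, W (d k) ≤ weightBelow (W ∘ d) (S d) (S d (σ j)) := by
  simp only [weightedMiscoverageSet, Set.mem_ofPred_eq, hS, Function.comp_apply,
    Equiv.sum_comp σ fun k => W (d k)]
  rw [← Function.comp_assoc, weightBelow_comp_perm]

open Classical in
lemma sum_filter_swap_mem_weightedMiscoverageSet_le [DecidableEq ι]
    (hS : ∀ (σ : Equiv.Perm ι) d, S (d ∘ σ) = S d ∘ σ) (hW : ∀ x, 0 ≤ W x) (hα : 0 ≤ α)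
    (j : ι) (z : ι → β) :
    ∑ i with z ∘ Equiv.swap i j ∈ weightedMiscoverageSet S W α j, ENNReal.ofReal (W (z i)) ≤
      ENNReal.ofReal α * ∑ i, ENNReal.ofReal (W (z i)) := by
  simp only [comp_perm_mem_weightedMiscoverageSet hS, Equiv.swap_apply_right]
  rw [← ENNReal.ofReal_sum_of_nonneg fun i _ => hW _,
    ← ENNReal.ofReal_sum_of_nonneg fun i _ => hW _, ← ENNReal.ofReal_mul hα]
  exact ENNReal.ofReal_le_ofReal (sum_filter_weightBelow_ge_le hα (fun i => hW (z i)) (S z))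

end Conformal

lemma map_eq_withDensity_of_iIndepFun {Ω ι γ : Type*} [MeasurableSpace Ω] {μ : Measure Ω}
    [IsProbabilityMeasure μ] [Fintype ι] [DecidableEq ι] [MeasurableSpace γ]
    {Z : ι → Ω → γ} (hZ : ∀ i, Measurable (Z i)) (hindep : iIndepFun Z μ)
    {P : Measure γ} [IsProbabilityMeasure P] {g : γ → ℝ≥0∞} (hg : Measurable g) {j : ι}
    (hrest : ∀ i ≠ j, μ.map (Z i) = P) (hj : μ.map (Z j) = P.withDensity g) :
    μ.map (fun ω i => Z i ω) = (Measure.pi fun _ => P).withDensity fun z => g (z j) := by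
  set ρ : ι → γ → ℝ≥0∞ := Pi.mulSingle j g
  have hlaw : ∀ i, μ.map (Z i) = P.withDensity (ρ i) := fun i => by
    rcases eq_or_ne i j with rfl | hi
    · simp [ρ, hj]
    · simp [ρ, hi, hrest i hi]
  have : ∀ i, IsProbabilityMeasure (P.withDensity (ρ i)) := fun i => by
    rw [← hlaw i]
    exact Measure.isProbabilityMeasure_map (hZ i).aemeasurable
  rw [(iIndepFun_iff_map_fun_eq_pi_map fun i => (hZ i).aemeasurable).mp hindep, funext hlaw,
    pi_withDensity fun i => ?_]
  · congr with z
    rw [Fintype.prod_eq_single j fun i hi => by simp [ρ, hi]]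
    simp [ρ]
  · rcases eq_or_ne i j with rfl | hi
    · simpa [ρ] using hg
    · simpa [ρ, hi] using measurable_one

/-- Weighted conformal coverage under covariate shift (Tibshirani et al.): the training
pairs `Z i = (X i, Y i)`, `i ≤ n`, are i.i.d. from `P`, the test pair `Z (n+1)` is
independently drawn from the distribution with density `w(x)` with respect to `P`
(same conditional of `Y` given `X`, shifted `X`-marginal with likelihood ratio `w`).
For any symmetric nonconformity score `𝒮`, the weighted conformal set with weights
`p_i ∝ w(X i)` and point mass `∝ w(X (n+1))` at `+∞` has coverage at least `1 − α`. -/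
theorem weighted_conformal_covariate_shift
    {Ω : Type*} [MeasureSpace Ω] [IsProbabilityMeasure (volume : Measure Ω)]
    {𝓧 𝓨 : Type*} [MeasurableSpace 𝓧] [MeasurableSpace 𝓨]
    (n : ℕ) (α : ℝ) (hα : α ∈ Set.Ioo (0 : ℝ) 1)
    (Z : Fin (n + 1) → Ω → 𝓧 × 𝓨)
    (P : Measure (𝓧 × 𝓨)) [IsProbabilityMeasure P]
    (w : 𝓧 → ℝ)
    (𝒮 : (Fin (n + 1) → 𝓧 × 𝓨) → Fin (n + 1) → ℝ)
    (hZmeas : ∀ i, Measurable (Z i))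
    (hwmeas : Measurable w) (hwnonneg : ∀ x, 0 ≤ w x)
    (h𝒮meas : ∀ i, Measurable fun d => 𝒮 d i)
    (h𝒮symm : ∀ (σ : Equiv.Perm (Fin (n + 1))) (d : Fin (n + 1) → 𝓧 × 𝓨),
      𝒮 (d ∘ σ) = (𝒮 d) ∘ σ)
    (hindep : iIndepFun Z volume)
    (htrain : ∀ i : Fin n, Measure.map (Z i.castSucc) volume = P)
    (htest : Measure.map (Z (Fin.last n)) volume
      = P.withDensity fun z => ENNReal.ofReal (w z.1)) :
    ENNReal.ofReal (1 - α) ≤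
      volume {ω : Ω |
        ((𝒮 (fun j => Z j ω) (Fin.last n) : ℝ) : EReal) ≤
          sInf {t : EReal | 1 - α ≤
            (∑ i : Fin n,
                if ((𝒮 (fun j => Z j ω) i.castSucc : ℝ) : EReal) ≤ t
                then w (Z i.castSucc ω).1 else 0)
                / ((∑ j : Fin n, w (Z j.castSucc ω).1) + w (Z (Fin.last n) ω).1)
              + (if (⊤ : EReal) ≤ t
                 then w (Z (Fin.last n) ω).1
                   / ((∑ j : Fin n, w (Z j.castSucc ω).1) + w (Z (Fin.last n) ω).1)
                 else 0)}} := by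
  classical
  obtain ⟨hα0, hα1⟩ := hα
  set W : 𝓧 × 𝓨 → ℝ := fun z => w z.1
  have hW : Measurable W := hwmeas.comp measurable_fst
  set J : Ω → Fin (n + 1) → 𝓧 × 𝓨 := fun ω j => Z j ω
  have hJ : Measurable J := measurable_pi_lambda _ hZmeas
  set A := weightedMiscoverageSet 𝒮 W α (Fin.last n)
  have hA : MeasurableSet A := measurableSet_weightedMiscoverageSet h𝒮meas hW _
  have hlaw : volume.map J =
      (Measure.pi fun _ => P).withDensity fun z => ENNReal.ofReal (W (z (Fin.last n))) :=
    map_eq_withDensity_of_iIndepFun hZmeas hindep (ENNReal.measurable_ofReal.comp hW)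
      (fun i hi => by
        obtain ⟨i, rfl⟩ := Fin.exists_castSucc_eq.mpr hi
        exact htrain i) htest
  have hmass : ∫⁻ x, ENNReal.ofReal (W x) ∂P = 1 := by
    have := Measure.isProbabilityMeasure_map (μ := volume) (hZmeas (Fin.last n)).aemeasurable
    rw [← setLIntegral_univ, ← withDensity_apply _ .univ, ← htest]
    exact measure_univ
  have hbad : volume (J ⁻¹' A) ≤ ENNReal.ofReal α := by
    rw [← Measure.map_apply hJ hA, hlaw]
    exact withDensity_apply_le_of_sum_swap_le (ENNReal.measurable_ofReal.comp hW) hmass hA _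
      (sum_filter_swap_mem_weightedMiscoverageSet_le h𝒮symm (fun x => hwnonneg x.1) hα0.le _)
  calc ENNReal.ofReal (1 - α) = 1 - ENNReal.ofReal α := by
        rw [ENNReal.ofReal_sub _ hα0.le, ENNReal.ofReal_one]
    _ ≤ 1 - volume (J ⁻¹' A) := tsub_le_tsub_left hbad 1
    _ = volume (J ⁻¹' A)ᶜ := (prob_compl_eq_one_sub (hJ hA)).symm
    _ ≤ _ := measure_mono fun ω hω => by
        refine coe_le_sInf_of_weightBelow_lt hα1 (fun _ => hwnonneg _) _ ?_
        change ¬ (1 - α) * ∑ k, W (J ω k) ≤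
          weightBelow (W ∘ J ω) (𝒮 (J ω)) (𝒮 (J ω) (Fin.last n)) at hω
        rwa [weightBelow_last, Fin.sum_univ_castSucc, not_le] at hω
end

section
/- Weighted exchangeability lemma: if Z_1,...,Z_{n+1} are independent with Z_i ~ P for i ≤ n and Z_{n+1} ~ P̃ where dP̃/dP = w, then for any measurable event determined by the unordered multiset {Z_1,...,Z_{n+1}}, the conditional probability that Z_{n+1} = z_i given the multiset {z_1,...,z_{n+1}} equals w(z_i)/Σ_{j=1}^{n+1} w(z_j). -/
open MeasureTheory ProbabilityTheory
open scoped ENNReal NNReal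

lemma lintegral_pi_prod_iid {γ : Type*} [MeasurableSpace γ] (P : Measure γ) [SigmaFinite P] :
    ∀ (m : ℕ) (h : Fin m → γ → ℝ≥0∞), (∀ i, Measurable (h i)) →
      ∫⁻ x : Fin m → γ, ∏ i, h i (x i) ∂(Measure.pi fun _ => P) = ∏ i, ∫⁻ y, h i y ∂P := by
  intro m
  induction m with
  | zero =>
      intro h _
      simp [Measure.pi_empty_univ]
  | succ m ih =>
      intro h hm
      have mp := (measurePreserving_piFinSuccAbove (fun _ : Fin (m + 1) => P) 0).symm
      have hF : Measurable fun x : Fin (m + 1) → γ => ∏ i, h i (x i) :=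
        Finset.measurable_prod _ fun i _ => (hm i).comp (measurable_pi_apply i)
      rw [← mp.lintegral_comp hF]
      simp_rw [MeasurableEquiv.piFinSuccAbove_symm_apply, Fin.insertNthEquiv,
        Equiv.coe_fn_mk, Fin.insertNth_zero, Fin.prod_univ_succ, Fin.cons_zero, Fin.cons_succ,
        cast_eq]
      rw [lintegral_prod_mul (f := h 0) (g := fun y : Fin m → γ => ∏ i, h i.succ (y i))
        (hm 0).aemeasurable
        (Finset.measurable_prod _ fun i _ =>
          ((hm i.succ).comp (measurable_pi_apply i))).aemeasurable]
      rw [ih (fun i => h i.succ) (fun i => hm i.succ)]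

lemma coe_piCongrLeft_perm {γ : Type*} [MeasurableSpace γ] {m : ℕ} (τ : Equiv.Perm (Fin m)) :
    ⇑(MeasurableEquiv.piCongrLeft (fun _ : Fin m => γ) τ.symm)
      = fun x : Fin m → γ => x ∘ τ := by
  funext x
  funext j
  rw [MeasurableEquiv.coe_piCongrLeft]
  have := Equiv.piCongrLeft_apply_apply (fun _ : Fin m => γ) τ.symm x (τ j)
  simp only [Equiv.symm_apply_apply] at this
  exact this

lemma measurePreserving_comp_perm {γ : Type*} [MeasurableSpace γ] (P : Measure γ)
    [SigmaFinite P] {m : ℕ} (τ : Equiv.Perm (Fin m)) :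
    MeasurePreserving (fun x : Fin m → γ => x ∘ τ)
      (Measure.pi fun _ => P) (Measure.pi fun _ => P) := by
  have h := measurePreserving_piCongrLeft (fun _ : Fin m => (P : Measure γ)) τ.symm
  rw [coe_piCongrLeft_perm τ] at h
  exact h

lemma measurableEmbedding_comp_perm {γ : Type*} [MeasurableSpace γ] {m : ℕ}
    (τ : Equiv.Perm (Fin m)) :
    MeasurableEmbedding (fun x : Fin m → γ => x ∘ τ) := by
  rw [← coe_piCongrLeft_perm τ]
  exact (MeasurableEquiv.piCongrLeft (fun _ : Fin m => γ) τ.symm).measurableEmbedding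

/-- Weighted exchangeability lemma (Tibshirani et al.): if `Z 1, ..., Z n` are i.i.d.
from `P` and `Z (n+1)` is independently drawn from `P̃` with `dP̃/dP = w`, then
conditionally on the unordered multiset of values, the test point equals `z i` with
probability `w (z i) / ∑ j w (z j)`.  Formally: for every bounded measurable `φ` and
every bounded measurable permutation-symmetric `H`,
`E[φ(Z (n+1)) H(Z)] = E[(∑ i w(Z i) φ(Z i) / ∑ j w(Z j)) H(Z)]`. -/
theorem weighted_exchangeability
    {Ω : Type*} [MeasureSpace Ω] [IsProbabilityMeasure (volume : Measure Ω)]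
    {γ : Type*} [MeasurableSpace γ]
    (n : ℕ) (Z : Fin (n + 1) → Ω → γ)
    (P : Measure γ) [IsProbabilityMeasure P]
    (w : γ → ℝ)
    (hZmeas : ∀ i, Measurable (Z i))
    (hwmeas : Measurable w) (hwnonneg : ∀ x, 0 ≤ w x)
    (hindep : iIndepFun Z volume)
    (htrain : ∀ i : Fin n, Measure.map (Z i.castSucc) volume = P)
    (htest : Measure.map (Z (Fin.last n)) volume
      = P.withDensity fun z => ENNReal.ofReal (w z))
    (φ : γ → ℝ) (hφmeas : Measurable φ) (Cφ : ℝ) (hφbdd : ∀ x, |φ x| ≤ Cφ)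
    (H : (Fin (n + 1) → γ) → ℝ) (hHmeas : Measurable H)
    (CH : ℝ) (hHbdd : ∀ d, |H d| ≤ CH)
    (hHsymm : ∀ (σ : Equiv.Perm (Fin (n + 1))) (d : Fin (n + 1) → γ),
      H (d ∘ σ) = H d) :
    ∫ ω, φ (Z (Fin.last n) ω) * H (fun j => Z j ω)
      = ∫ ω, ((∑ i, w (Z i ω) * φ (Z i ω)) / ∑ j, w (Z j ω))
          * H (fun j => Z j ω) := by
  classical
  -- nonemptiness and sign facts
  have hΩ : Nonempty Ω := by
    by_contra h
    rw [not_nonempty_iff] at h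
    have h1 := measure_univ (μ := (volume : Measure Ω))
    rw [Set.univ_eq_empty_iff.mpr h, measure_empty] at h1
    exact zero_ne_one h1
  have hγ : Nonempty γ := ⟨Z 0 hΩ.some⟩
  have hCφ : 0 ≤ Cφ := le_trans (abs_nonneg _) (hφbdd hγ.some)
  haveI hQ : IsProbabilityMeasure (P.withDensity fun z => ENNReal.ofReal (w z)) := by
    rw [← htest]; exact Measure.isProbabilityMeasure_map (hZmeas _).aemeasurable
  have hJmeas : Measurable (fun ω => (fun i => Z i ω)) := measurable_pi_lambda _ hZmeas
  set μv : Fin (n + 1) → Measure γ :=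
    fun i => if i = Fin.last n then P.withDensity (fun z => ENNReal.ofReal (w z)) else P
    with hμv
  haveI : ∀ i, IsProbabilityMeasure (μv i) := by
    intro i
    simp only [hμv]
    by_cases hi : i = Fin.last n
    · rw [if_pos hi]; exact hQ
    · rw [if_neg hi]; infer_instance
  -- Step A: joint law is the product measure
  have hmap : Measure.map (fun ω => fun i => Z i ω) volume = Measure.pi μv := by
    refine (Measure.pi_eq fun s hs => ?_).symm
    rw [Measure.map_apply hJmeas (MeasurableSet.univ_pi hs)]
    have hpre : (fun ω => fun i => Z i ω) ⁻¹' Set.univ.pi s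
        = ⋂ i ∈ Finset.univ, Z i ⁻¹' s i := by
      ext ω; simp [Set.mem_pi]
    rw [hpre, hindep.measure_inter_preimage_eq_mul Finset.univ (fun i _ => hs i)]
    refine Finset.prod_congr rfl fun i _ => ?_
    rw [← Measure.map_apply (hZmeas i) (hs i)]
    by_cases hi : i = Fin.last n
    · subst hi
      rw [htest]
      simp [hμv]
    · simp only [hμv]
      rw [if_neg hi]
      have h2 := htrain (i.castPred hi)
      rw [Fin.castSucc_castPred] at h2
      rw [h2]
  -- Step B: product measure as density w.r.t. the iid product
  have hpiwd : Measure.pi μv = (Measure.pi fun _ : Fin (n + 1) => P).withDensity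
      (fun x => ENNReal.ofReal (w (x (Fin.last n)))) := by
    refine Measure.pi_eq fun s hs => ?_
    rw [withDensity_apply _ (MeasurableSet.univ_pi hs),
      ← lintegral_indicator (MeasurableSet.univ_pi hs)]
    have hpt : ∀ x : Fin (n + 1) → γ,
        (Set.univ.pi s).indicator (fun x => ENNReal.ofReal (w (x (Fin.last n)))) x
          = ∏ i, (s i).indicator
              (fun y => if i = Fin.last n then ENNReal.ofReal (w y) else 1) (x i) := by
      intro x
      by_cases hx : x ∈ Set.univ.pi s
      · rw [Set.indicator_of_mem hx]
        have hterm : ∀ i : Fin (n + 1), (s i).indicator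
            (fun y => if i = Fin.last n then ENNReal.ofReal (w y) else 1) (x i)
              = if i = Fin.last n then ENNReal.ofReal (w (x i)) else 1 :=
          fun i => Set.indicator_of_mem (hx i (Set.mem_univ i)) _
        simp only [hterm]
        rw [Finset.prod_ite_eq' Finset.univ (Fin.last n)
          (fun i => ENNReal.ofReal (w (x i)))]
        simp
      · rw [Set.indicator_of_notMem hx]
        have : ∃ i, x i ∉ s i := by
          by_contra hc
          push_neg at hc
          exact hx fun i _ => hc i
        obtain ⟨i, hxi⟩ := this
        exact (Finset.prod_eq_zero (Finset.mem_univ i)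
          (Set.indicator_of_notMem hxi _)).symm
    rw [lintegral_congr hpt,
      lintegral_pi_prod_iid P (n + 1) _ (fun i => Measurable.indicator
        (by by_cases hi : i = Fin.last n
            · simp only [if_pos hi]; exact hwmeas.ennreal_ofReal
            · simp only [if_neg hi]; exact measurable_const) (hs i))]
    refine Finset.prod_congr rfl fun i _ => ?_
    by_cases hi : i = Fin.last n
    · subst hi
      simp only [if_pos rfl]
      rw [lintegral_indicator (hs _), ← withDensity_apply _ (hs _)]
      simp [hμv]
    · simp only [if_neg hi]
      rw [lintegral_indicator (hs _), setLIntegral_one]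
      simp only [hμv]
      rw [if_neg hi]
  -- combined law with NNReal density
  have hlaw : Measure.map (fun ω => fun i => Z i ω) volume
      = (Measure.pi fun _ : Fin (n + 1) => P).withDensity
          (fun x => ((w (x (Fin.last n))).toNNReal : ℝ≥0∞)) := by
    rw [hmap, hpiwd]
    rfl
  -- transfer of integrals
  have hkey : ∀ F : (Fin (n + 1) → γ) → ℝ, Measurable F →
      ∫ ω, F (fun i => Z i ω)
        = ∫ x, w (x (Fin.last n)) * F x ∂(Measure.pi fun _ : Fin (n + 1) => P) := by
    intro F hF
    have h1 : ∫ ω, F (fun i => Z i ω)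
        = ∫ x, F x ∂(Measure.map (fun ω => fun i => Z i ω) volume) :=
      (integral_map hJmeas.aemeasurable hF.aestronglyMeasurable).symm
    have hfmeas : Measurable fun x : Fin (n + 1) → γ => (w (x (Fin.last n))).toNNReal :=
      (hwmeas.comp (measurable_pi_apply _)).real_toNNReal
    rw [h1, hlaw, integral_withDensity_eq_integral_smul hfmeas F]
    refine integral_congr_ae (Filter.Eventually.of_forall fun x => ?_)
    simp [NNReal.smul_def, Real.coe_toNNReal _ (hwnonneg _)]
  have hmeas1 : Measurable fun x : Fin (n + 1) → γ => φ (x (Fin.last n)) * H x :=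
    (hφmeas.comp (measurable_pi_apply _)).mul hHmeas
  have hSmeas : Measurable fun x : Fin (n + 1) → γ => ∑ j, w (x j) :=
    Finset.measurable_sum _ fun j _ => hwmeas.comp (measurable_pi_apply j)
  have hmeas2 : Measurable fun x : Fin (n + 1) → γ =>
      (∑ i, w (x i) * φ (x i)) / (∑ j, w (x j)) * H x :=
    (((Finset.measurable_sum _ fun i _ => (hwmeas.comp (measurable_pi_apply i)).mul
      (hφmeas.comp (measurable_pi_apply i))).div hSmeas).mul hHmeas)
  have e1 : ∫ ω, φ (Z (Fin.last n) ω) * H (fun j => Z j ω)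
      = ∫ x, w (x (Fin.last n)) * (φ (x (Fin.last n)) * H x)
          ∂(Measure.pi fun _ : Fin (n + 1) => P) := hkey _ hmeas1
  have e2 : ∫ ω, ((∑ i, w (Z i ω) * φ (Z i ω)) / ∑ j, w (Z j ω)) * H (fun j => Z j ω)
      = ∫ x, w (x (Fin.last n)) * ((∑ i, w (x i) * φ (x i)) / (∑ j, w (x j)) * H x)
          ∂(Measure.pi fun _ : Fin (n + 1) => P) := hkey _ hmeas2
  rw [e1, e2]
  -- facts about S
  have hS0 : ∀ x : Fin (n + 1) → γ, 0 ≤ ∑ j, w (x j) :=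
    fun x => Finset.sum_nonneg fun j _ => hwnonneg _
  have hfrac : ∀ (x : Fin (n + 1) → γ) (i : Fin (n + 1)),
      |w (x i) / ∑ j, w (x j)| ≤ 1 := by
    intro x i
    rcases eq_or_ne (∑ j, w (x j)) 0 with h | h
    · simp [h]
    · rw [abs_div, abs_of_nonneg (hwnonneg _), abs_of_nonneg (hS0 x),
        div_le_one (lt_of_le_of_ne (hS0 x) (Ne.symm h))]
      exact Finset.single_le_sum (fun j _ => hwnonneg (x j)) (Finset.mem_univ i)
  -- integrability of the weight of the last coordinate
  have hwL : Integrable (fun x : Fin (n + 1) → γ => w (x (Fin.last n)))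
      (Measure.pi fun _ : Fin (n + 1) => P) := by
    refine ⟨(hwmeas.comp (measurable_pi_apply _)).aestronglyMeasurable, ?_⟩
    rw [hasFiniteIntegral_iff_norm]
    have hpt : ∀ x : Fin (n + 1) → γ, ENNReal.ofReal ‖w (x (Fin.last n))‖
        = ∏ i, (if i = Fin.last n then ENNReal.ofReal (w (x i)) else 1) := by
      intro x
      rw [Finset.prod_ite_eq' Finset.univ (Fin.last n)
        (fun i => ENNReal.ofReal (w (x i)))]
      simp [Real.norm_of_nonneg (hwnonneg _)]
    rw [lintegral_congr hpt,
      lintegral_pi_prod_iid P (n + 1)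
        (fun i y => if i = Fin.last n then ENNReal.ofReal (w y) else 1)
        (fun i => by
          by_cases hi : i = Fin.last n
          · simp only [if_pos hi]; exact hwmeas.ennreal_ofReal
          · simp only [if_neg hi]; exact measurable_const)]
    have hfac : ∀ i : Fin (n + 1),
        ∫⁻ y, (if i = Fin.last n then ENNReal.ofReal (w y) else 1) ∂P = 1 := by
      intro i
      by_cases hi : i = Fin.last n
      · simp only [if_pos hi]
        have h1 : ∫⁻ y, ENNReal.ofReal (w y) ∂P
            = (P.withDensity fun z => ENNReal.ofReal (w z)) Set.univ := by
          rw [withDensity_apply _ MeasurableSet.univ, Measure.restrict_univ]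
        rw [h1, measure_univ]
      · simp only [if_neg hi]
        simp
    simp only [hfac]
    simp
  have hbd : ∀ (B : (Fin (n + 1) → γ) → ℝ) (C : ℝ), Measurable B → (∀ x, |B x| ≤ C) →
      Integrable (fun x => B x * w (x (Fin.last n)))
        (Measure.pi fun _ : Fin (n + 1) => P) :=
    fun B C hB hC => hwL.bdd_mul hB.aestronglyMeasurable
      (c := C) (Filter.Eventually.of_forall fun x => by rw [Real.norm_eq_abs]; exact hC x)
  -- integrability of each summand
  have hAint : ∀ i : Fin (n + 1), Integrable
      (fun x : Fin (n + 1) → γ =>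
        w (x i) * φ (x i) / (∑ j, w (x j)) * H x * w (x (Fin.last n)))
      (Measure.pi fun _ : Fin (n + 1) => P) := by
    intro i
    refine hbd _ (Cφ * CH) ((((hwmeas.comp (measurable_pi_apply i)).mul
      (hφmeas.comp (measurable_pi_apply i))).div hSmeas).mul hHmeas) fun x => ?_
    rw [mul_div_right_comm, abs_mul, abs_mul]
    have h1 : |w (x i) / ∑ j, w (x j)| * |φ (x i)| ≤ 1 * Cφ :=
      mul_le_mul (hfrac x i) (hφbdd _) (abs_nonneg _) zero_le_one
    calc |w (x i) / ∑ j, w (x j)| * |φ (x i)| * |H x|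
        ≤ (1 * Cφ) * CH := mul_le_mul h1 (hHbdd _) (abs_nonneg _)
          (by rw [one_mul]; exact hCφ)
      _ = Cφ * CH := by rw [one_mul]
  have hA'int : ∀ i : Fin (n + 1), Integrable
      (fun x : Fin (n + 1) → γ =>
        w (x i) / (∑ j, w (x j)) * φ (x (Fin.last n)) * H x * w (x (Fin.last n)))
      (Measure.pi fun _ : Fin (n + 1) => P) := by
    intro i
    refine hbd _ (Cφ * CH) ((((hwmeas.comp (measurable_pi_apply i)).div hSmeas).mul
      (hφmeas.comp (measurable_pi_apply _))).mul hHmeas) fun x => ?_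
    rw [abs_mul, abs_mul]
    have h1 : |w (x i) / ∑ j, w (x j)| * |φ (x (Fin.last n))| ≤ 1 * Cφ :=
      mul_le_mul (hfrac x i) (hφbdd _) (abs_nonneg _) zero_le_one
    calc |w (x i) / ∑ j, w (x j)| * |φ (x (Fin.last n))| * |H x|
        ≤ (1 * Cφ) * CH := mul_le_mul h1 (hHbdd _) (abs_nonneg _)
          (by rw [one_mul]; exact hCφ)
      _ = Cφ * CH := by rw [one_mul]
  -- swapping coordinate i with the last coordinate
  have hswap : ∀ i : Fin (n + 1),
      ∫ x, w (x i) * φ (x i) / (∑ j, w (x j)) * H x * w (x (Fin.last n))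
          ∂(Measure.pi fun _ : Fin (n + 1) => P)
        = ∫ x, w (x i) / (∑ j, w (x j)) * φ (x (Fin.last n)) * H x * w (x (Fin.last n))
          ∂(Measure.pi fun _ : Fin (n + 1) => P) := by
    intro i
    set τ : Equiv.Perm (Fin (n + 1)) := Equiv.swap i (Fin.last n) with hτ
    have mp := measurePreserving_comp_perm P τ (γ := γ)
    have hemb := measurableEmbedding_comp_perm (γ := γ) τ
    rw [← mp.integral_comp hemb
      (fun x => w (x i) * φ (x i) / (∑ j, w (x j)) * H x * w (x (Fin.last n)))]
    refine integral_congr_ae (Filter.Eventually.of_forall fun x => ?_)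
    dsimp only
    have h1 : (x ∘ τ) i = x (Fin.last n) := by
      simp [hτ, Equiv.swap_apply_left]
    have h2 : (x ∘ τ) (Fin.last n) = x i := by
      simp [hτ, Equiv.swap_apply_right]
    have h3 : (∑ j, w ((x ∘ τ) j)) = ∑ j, w (x j) := by
      exact Equiv.sum_comp τ (fun j => w (x j))
    have h4 : H (x ∘ τ) = H x := hHsymm τ x
    simp only [h1, h2, h3, h4]
    ring
  -- main computation
  have main :
      ∫ x, w (x (Fin.last n)) * ((∑ i, w (x i) * φ (x i)) / (∑ j, w (x j)) * H x)
          ∂(Measure.pi fun _ : Fin (n + 1) => P)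
        = ∫ x, w (x (Fin.last n)) * (φ (x (Fin.last n)) * H x)
          ∂(Measure.pi fun _ : Fin (n + 1) => P) := by
    calc ∫ x, w (x (Fin.last n)) * ((∑ i, w (x i) * φ (x i)) / (∑ j, w (x j)) * H x)
            ∂(Measure.pi fun _ : Fin (n + 1) => P)
        = ∫ x, ∑ i, w (x i) * φ (x i) / (∑ j, w (x j)) * H x * w (x (Fin.last n))
            ∂(Measure.pi fun _ : Fin (n + 1) => P) := by
          refine integral_congr_ae (Filter.Eventually.of_forall fun x => ?_)
          dsimp only
          rw [← Finset.sum_mul, ← Finset.sum_mul, ← Finset.sum_div]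
          ring
      _ = ∑ i, ∫ x, w (x i) * φ (x i) / (∑ j, w (x j)) * H x * w (x (Fin.last n))
            ∂(Measure.pi fun _ : Fin (n + 1) => P) :=
          integral_finset_sum Finset.univ (fun i _ => hAint i)
      _ = ∑ i, ∫ x, w (x i) / (∑ j, w (x j)) * φ (x (Fin.last n)) * H x
              * w (x (Fin.last n)) ∂(Measure.pi fun _ : Fin (n + 1) => P) :=
          Finset.sum_congr rfl fun i _ => hswap i
      _ = ∫ x, ∑ i, w (x i) / (∑ j, w (x j)) * φ (x (Fin.last n)) * H x
              * w (x (Fin.last n)) ∂(Measure.pi fun _ : Fin (n + 1) => P) :=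
          (integral_finset_sum Finset.univ (fun i _ => hA'int i)).symm
      _ = ∫ x, w (x (Fin.last n)) * (φ (x (Fin.last n)) * H x)
            ∂(Measure.pi fun _ : Fin (n + 1) => P) := by
          refine integral_congr_ae (Filter.Eventually.of_forall fun x => ?_)
          dsimp only
          rw [← Finset.sum_mul, ← Finset.sum_mul, ← Finset.sum_mul, ← Finset.sum_div]
          rcases eq_or_ne (∑ j, w (x j)) 0 with h | h
          · have hL0 : w (x (Fin.last n)) = 0 :=
              (Finset.sum_eq_zero_iff_of_nonneg (fun j _ => hwnonneg (x j))).mp h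
                (Fin.last n) (Finset.mem_univ _)
            rw [hL0]
            ring
          · rw [div_self h]
            ring
  exact main.symm
end

section
/- Empirical quantile inflation guarantees finite-sample validity: for i.i.d. continuous real random variables S_1,...,S_n, S_{n+1}, letting q̂ be the ⌈(1+1/n)(1−α)·n⌉-th order statistic of S_1,...,S_n (assuming (1+1/n)(1−α) ≤ 1), it holds that 1−α ≤ P(S_{n+1} ≤ q̂) ≤ 1−α + 1/(n+1). -/
/-!
Almost surely the scores are distinct, and then `S (n+1) ≤ q̂` holds exactly when `S (n+1)` has
rank at most `k = ⌈(n+1)(1-α)⌉` among all `n+1` scores. By exchangeability every score has the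
same probability of having rank at most `k`, and almost surely exactly `k` of them do, so the
coverage is `k / (n+1)`, which lies in `[1-α, 1-α + 1/(n+1)]`.
-/

open MeasureTheory ProbabilityTheory Finset
open scoped ENNReal

section Counting

variable {ι α : Type*} [Fintype ι] [LinearOrder α]

def countLE (y : ι → α) (t : α) : ℕ := #{i | y i ≤ t}

theorem countLE_mono (y : ι → α) : Monotone (countLE y) := fun _ _ hst =>
  card_le_card <| monotone_filter_right _ fun _ _ hi => hi.trans hst

theorem countLE_lt_countLE_self_iff {y : ι → α} {t : α} {a : ι} :
    countLE y t < countLE y (y a) ↔ t < y a := by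
  refine ⟨fun h => lt_of_not_ge fun hle => h.not_ge (countLE_mono y hle), fun h => ?_⟩
  exact card_lt_card <| (ssubset_iff_of_subset <| monotone_filter_right _
    fun _ _ hi => hi.trans h.le).2 ⟨a, by simp, by simpa using h⟩

theorem countLE_self_injective {x : ι → α} (hx : Function.Injective x) :
    Function.Injective fun a => countLE x (x a) := by
  intro a b hab
  by_contra hne
  rcases lt_or_gt_of_ne (hx.ne hne) with h | h
  · exact (countLE_lt_countLE_self_iff.2 h).ne hab
  · exact (countLE_lt_countLE_self_iff.2 h).ne' hab

theorem image_countLE_self {x : ι → α} (hx : Function.Injective x) :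
    univ.image (fun a => countLE x (x a)) = Icc 1 (Fintype.card ι) := by
  refine eq_of_subset_of_card_le (fun r hr => ?_) ?_
  · obtain ⟨a, -, rfl⟩ := mem_image.1 hr
    exact mem_Icc.2 ⟨card_pos.2 ⟨a, by simp⟩, card_filter_le _ _⟩
  · rw [card_image_of_injective _ (countLE_self_injective hx), Nat.card_Icc, card_univ]
    omega

theorem card_countLE_self_le {x : ι → α} (hx : Function.Injective x) {k : ℕ}
    (hk : k ≤ Fintype.card ι) : #{a | countLE x (x a) ≤ k} = k := by
  have hIcc : (Icc 1 (Fintype.card ι)).filter (· ≤ k) = Icc 1 k := by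
    ext r
    simp only [mem_filter, mem_Icc]
    omega
  rw [← card_image_of_injective _ (countLE_self_injective hx), ← filter_image (p := (· ≤ k)),
    image_countLE_self hx, hIcc, Nat.card_Icc, Nat.add_sub_cancel]

theorem countLE_comp_equiv {x : ι → α} (σ : ι ≃ ι) (t : α) :
    countLE (x ∘ σ) t = countLE x t := by
  simp only [countLE, card_filter]
  exact Equiv.sum_comp σ (fun i => if x i ≤ t then 1 else 0)

theorem countLE_fin_succ {n : ℕ} (x : Fin (n + 1) → α) (t : α) :
    countLE x t =
      countLE (fun i : Fin n => x i.castSucc) t + if x (Fin.last n) ≤ t then 1 else 0 := by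
  simp only [countLE, card_filter, Fin.sum_univ_castSucc]

end Counting

section OrderStatistic

variable {ι α : Type*} [Fintype ι] [ConditionallyCompleteLinearOrder α]

def orderStat (y : ι → α) (k : ℕ) : α := sInf {t | k ≤ countLE y t}

theorem orderStat_countLE_self (y : ι → α) (a : ι) : orderStat y (countLE y (y a)) = y a := by
  have : {t | countLE y (y a) ≤ countLE y t} = Set.Ici (y a) := by
    ext t
    simpa using countLE_lt_countLE_self_iff.not
  rw [orderStat, this, csInf_Ici]

theorem le_orderStat_iff_countLE_le {n k : ℕ} {x : Fin (n + 1) → α}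
    (hx : Function.Injective x) (hk₁ : 1 ≤ k) (hkn : k ≤ n) :
    x (Fin.last n) ≤ orderStat (fun i : Fin n => x i.castSucc) k ↔
      countLE x (x (Fin.last n)) ≤ k := by
  set y : Fin n → α := fun i => x i.castSucc
  have hy : Function.Injective y := hx.comp (Fin.castSucc_injective n)
  obtain ⟨i, -, rfl⟩ : ∃ i ∈ univ, countLE y (y i) = k := by
    rw [← mem_image, image_countLE_self hy, Fintype.card_fin]
    exact mem_Icc.2 ⟨hk₁, hkn⟩
  have hne : x (Fin.last n) ≠ y i := hx.ne (Fin.castSucc_lt_last i).ne'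
  rw [orderStat_countLE_self, countLE_fin_succ, if_pos le_rfl, Nat.add_one_le_iff,
    countLE_lt_countLE_self_iff, le_iff_lt_or_eq, or_iff_left hne]

end OrderStatistic

section Exchangeable

variable {ι α : Type*} [Fintype ι] [LinearOrder α] [MeasurableSpace α] [TopologicalSpace α]
  [OrderClosedTopology α] [SecondCountableTopology α] [OpensMeasurableSpace α]

theorem measurableSet_countLE_self_le (a : ι) (k : ℕ) :
    MeasurableSet {x : ι → α | countLE x (x a) ≤ k} := by
  have hcount : Measurable fun x : ι → α => countLE x (x a) := by
    simp only [countLE, card_filter]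
    exact Finset.measurable_sum _ fun i _ => Measurable.ite
      (measurableSet_le (measurable_pi_apply i) (measurable_pi_apply a))
      measurable_const measurable_const
  exact hcount measurableSet_Iic

theorem measure_countLE_self_le (P : Measure (ι → α)) [IsProbabilityMeasure P]
    (hexch : ∀ σ : Equiv.Perm ι, P.map (fun x => x ∘ σ) = P)
    (hinj : ∀ᵐ x ∂P, Function.Injective x) (a : ι) {k : ℕ} (hk : k ≤ Fintype.card ι) :
    P {x | countLE x (x a) ≤ k} = k / Fintype.card ι := by
  set E : ι → Set (ι → α) := fun m => {x | countLE x (x m) ≤ k}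
  have hE : ∀ m, MeasurableSet (E m) := fun m => measurableSet_countLE_self_le m k
  have hswap : ∀ m, P (E m) = P (E a) := by
    intro m
    classical
    have hpre : (fun x => x ∘ Equiv.swap a m) ⁻¹' E a = E m := by
      ext x
      simp only [E, Set.mem_preimage, Set.mem_ofPred_eq, Function.comp_apply, countLE_comp_equiv,
        Equiv.swap_apply_left]
    rw [← hpre, ← Measure.map_apply (by fun_prop) (hE a), hexch]
  have hsum : ∑ m, P (E m) = k := by
    have hcount : ∀ᵐ x ∂P, ∑ m, (E m).indicator 1 x = (k : ℝ≥0∞) := by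
      filter_upwards [hinj] with x hx
      simp only [Set.indicator_apply, Pi.one_apply, sum_boole]
      exact_mod_cast card_countLE_self_le hx hk
    simp_rw [← lintegral_indicator_one (hE _)]
    rw [← lintegral_finsetSum _ fun m _ => measurable_one.indicator (hE m),
      lintegral_congr_ae hcount, lintegral_const, measure_univ, mul_one]
  rw [Finset.sum_congr rfl fun m _ => hswap m, sum_const, card_univ, nsmul_eq_mul] at hsum
  have : Nonempty ι := ⟨a⟩
  exact (ENNReal.eq_div_iff (by simp) (by simp)).2 hsum

end Exchangeable

section Independent

variable {ι α : Type*} [MeasurableSpace α]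

theorem ae_injective_of_measure_eq_null [Countable ι] {P : Measure (ι → α)}
    (h : ∀ i j, i ≠ j → P {x | x i = x j} = 0) : ∀ᵐ x ∂P, Function.Injective x := by
  simp only [Function.Injective, ae_all_iff]
  intro i j
  by_cases hij : i = j
  · exact Filter.Eventually.of_forall fun _ _ => hij
  · exact measure_eq_zero_iff_ae_notMem.1 (h i j hij) |>.mono fun _ hx heq => absurd heq hx

theorem ProbabilityTheory.IndepFun.measure_eq_eq_zero [MeasurableEq α] {Ω : Type*}
    [MeasurableSpace Ω] {μ : Measure Ω} [IsFiniteMeasure μ] {f g : Ω → α}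
    (hf : Measurable f) (hg : Measurable g) (hfg : IndepFun f g μ)
    (hg₀ : ∀ t, μ.map g {t} = 0) : μ {ω | f ω = g ω} = 0 := by
  have hdiag : MeasurableSet {p : α × α | p.1 = p.2} := measurableSet_diagonal
  have hfiber : ∀ a : α, Prod.mk a ⁻¹' {p : α × α | p.1 = p.2} = {a} := fun a => by
    ext b; simp [eq_comm]
  change μ ((fun ω => (f ω, g ω)) ⁻¹' {p : α × α | p.1 = p.2}) = 0
  rw [← Measure.map_apply (hf.prodMk hg) hdiag,
    (indepFun_iff_map_prod_eq_prod_map_map hf.aemeasurable hg.aemeasurable).1 hfg,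
    Measure.prod_apply hdiag]
  simp [hfiber, hg₀]

variable {Ω : Type*} [MeasurableSpace Ω] {μ : Measure Ω} [IsProbabilityMeasure μ]
  {S : ι → Ω → α}

theorem ProbabilityTheory.iIndepFun.ae_injective_map [MeasurableEq α] [Countable ι]
    (hS : ∀ i, Measurable (S i)) (hindep : iIndepFun S μ) (hcont : ∀ i t, μ.map (S i) {t} = 0) :
    ∀ᵐ x ∂μ.map (fun ω i => S i ω), Function.Injective x :=
  ae_injective_of_measure_eq_null fun i j hij => by
    rw [Measure.map_apply (measurable_pi_lambda _ hS)
      (measurableSet_eq_fun (measurable_pi_apply i) (measurable_pi_apply j))]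
    exact (hindep.indepFun hij).measure_eq_eq_zero (hS i) (hS j) (hcont j)

theorem ProbabilityTheory.iIndepFun.map_comp_equiv [Fintype ι] (hS : ∀ i, Measurable (S i))
    (hindep : iIndepFun S μ) (hident : ∀ i j, IdentDistrib (S i) (S j) μ μ) (σ : ι ≃ ι) :
    (μ.map fun ω i => S i ω).map (fun x => x ∘ σ) = μ.map fun ω i => S i ω := by
  have : ∀ i, IsProbabilityMeasure (μ.map (S i)) := fun i =>
    Measure.isProbabilityMeasure_map (hS i).aemeasurable
  rw [(iIndepFun_iff_map_fun_eq_pi_map fun i => (hS i).aemeasurable).1 hindep]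
  exact (measurePreserving_arrowCongr' _ _ σ.symm (MeasurableEquiv.refl α) fun i =>
    (hident (σ.symm i) i).map_eq ▸ MeasurePreserving.id _).map_eq

end Independent

theorem natCeil_mul_div_mem_Icc {p N : ℝ} (hp : 0 ≤ p) (hN : 0 < N) :
    (⌈N * p⌉₊ : ℝ) / N ∈ Set.Icc p (p + 1 / N) := by
  rw [Set.mem_Icc, le_div_iff₀ hN, div_le_iff₀ hN, add_mul, one_div_mul_cancel hN.ne']
  exact ⟨by linarith [Nat.le_ceil (N * p)],
    by linarith [Nat.ceil_lt_add_one (by positivity : 0 ≤ N * p)]⟩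

/-- Two-sided split conformal coverage: for i.i.d. continuous (atomless) scores
`S 1, ..., S (n+1)`, with `q̂` the `⌈(1+1/n)(1−α)n⌉`-th order statistic of the first
`n` scores (assuming `(1+1/n)(1−α) ≤ 1`), the coverage satisfies
`1 − α ≤ P(S (n+1) ≤ q̂) ≤ 1 − α + 1/(n+1)`. -/
theorem split_conformal_two_sided
    {Ω : Type*} [MeasureSpace Ω] [IsProbabilityMeasure (volume : Measure Ω)]
    (n : ℕ) (hn : 0 < n) (α : ℝ) (hα : α ∈ Set.Ioo (0 : ℝ) 1)
    (S : Fin (n + 1) → Ω → ℝ)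
    (hSmeas : ∀ i, Measurable (S i))
    (hindep : iIndepFun S volume)
    (hident : ∀ i j, IdentDistrib (S i) (S j))
    (hcont : ∀ (i : Fin (n + 1)) (t : ℝ), Measure.map (S i) volume {t} = 0)
    (hlevel : (1 + 1 / (n : ℝ)) * (1 - α) ≤ 1) :
    ENNReal.ofReal (1 - α) ≤
        volume {ω : Ω | S (Fin.last n) ω ≤
          sInf {t : ℝ | ⌈(1 + 1 / (n : ℝ)) * (1 - α) * n⌉₊ ≤
            (univ.filter fun i : Fin n => S i.castSucc ω ≤ t).card}}
      ∧ volume {ω : Ω | S (Fin.last n) ω ≤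
          sInf {t : ℝ | ⌈(1 + 1 / (n : ℝ)) * (1 - α) * n⌉₊ ≤
            (univ.filter fun i : Fin n => S i.castSucc ω ≤ t).card}}
        ≤ ENNReal.ofReal (1 - α + 1 / (n + 1)) := by
  set k := ⌈(1 + 1 / (n : ℝ)) * (1 - α) * n⌉₊ with hk
  have hkN : (1 + 1 / (n : ℝ)) * (1 - α) * n = (n + 1) * (1 - α) := by field_simp
  have hk₁ : 1 ≤ k := Nat.ceil_pos.2 (hkN ▸ mul_pos (by positivity) (sub_pos.2 hα.2))
  have hkn : k ≤ n := Nat.ceil_le.2 ((mul_le_iff_le_one_left (by positivity)).2 hlevel)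
  set T : Ω → Fin (n + 1) → ℝ := fun ω i => S i ω
  have hT : Measurable T := measurable_pi_lambda _ hSmeas
  have : IsProbabilityMeasure (volume.map T) := Measure.isProbabilityMeasure_map hT.aemeasurable
  have hinj : ∀ᵐ x ∂volume.map T, Function.Injective x := hindep.ae_injective_map hSmeas hcont
  have hcov : volume {ω | S (Fin.last n) ω ≤ orderStat (fun i : Fin n => S i.castSucc ω) k}
      = ENNReal.ofReal (k / (n + 1)) := by
    have hevent : {ω | S (Fin.last n) ω ≤ orderStat (fun i : Fin n => S i.castSucc ω) k}
        =ᵐ[volume] T ⁻¹' {x | countLE x (x (Fin.last n)) ≤ k} :=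
      (ae_of_ae_map hT.aemeasurable hinj).mono fun ω hω =>
        propext (le_orderStat_iff_countLE_le hω hk₁ hkn)
    rw [measure_congr hevent, ← Measure.map_apply hT (measurableSet_countLE_self_le _ _),
      measure_countLE_self_le _ (hindep.map_comp_equiv hSmeas hident) hinj _
        (by rw [Fintype.card_fin]; omega),
      ENNReal.ofReal_div_of_pos (by positivity), ENNReal.ofReal_natCast, Fintype.card_fin]
    norm_cast
  obtain ⟨hlo, hhi⟩ : (k : ℝ) / (n + 1) ∈ Set.Icc (1 - α) (1 - α + 1 / (n + 1)) :=
    hk ▸ hkN ▸ natCeil_mul_div_mem_Icc (sub_nonneg.2 hα.2.le) (by positivity)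
  exact ⟨(ENNReal.ofReal_le_ofReal hlo).trans_eq hcov.symm,
    hcov.trans_le (ENNReal.ofReal_le_ofReal hhi)⟩
end
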